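/- For every odd prime p with p ≥ 5, the Toeplitz graph T_{2p}⟨{2, p}⟩ satisfies 2p/(2p−1) ≤ ldim_f(T_{2p}⟨{2, p}⟩) ≤ 2p/(2p−2) = p/(p−1). -/

import Mathlib

open Finset

/-- A local resolving function of a graph `G`: a map `ζ : V → [0,1]` such that for every
pair of adjacent vertices `u v`, the sum of `ζ` over the local resolving neighborhood
`R{u,v} = {w : d(w,u) ≠ d(w,v)}` is at least `1`. -/
def IsLocalResolvingFunction {V : Type*} [Fintype V] (G : SimpleGraph V) (ζ : V → ℝ) : Prop :=
  (∀ w, ζ w ∈ Set.Icc (0 : ℝ) 1) ∧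
    ∀ u v, G.Adj u v →
      1 ≤ ∑ w ∈ Finset.univ.filter (fun w => G.dist w u ≠ G.dist w v), ζ w

/-- The local fractional metric dimension of `G`: the minimum of `∑ v, ζ v` over all
local resolving functions `ζ` of `G`. -/
noncomputable def ldimf {V : Type*} [Fintype V] (G : SimpleGraph V) : ℝ :=
  sInf {s : ℝ | ∃ ζ : V → ℝ, IsLocalResolvingFunction G ζ ∧ s = ∑ v, ζ v}

/-- The Toeplitz graph `T_n⟨S⟩` (vertices `0, …, n-1` standing for `1, …, n`):
two distinct vertices are adjacent iff their absolute difference lies in `S`. -/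
def toeplitzGraph (n : ℕ) (S : Set ℕ) : SimpleGraph (Fin n) where
  Adj p q := p ≠ q ∧ Nat.dist (p : ℕ) (q : ℕ) ∈ S
  symm := ⟨fun p q ⟨h1, h2⟩ => ⟨h1.symm, by rwa [Nat.dist_comm]⟩⟩
  loopless := ⟨fun p ⟨h, _⟩ => h rfl⟩

/-!
In `T_{2p}⟨{2, p}⟩` with `p` odd, the distance between `a` and `b` depends only on
`k = |a - b|`: it is `min (k/2) (p + 2 - k/2)` for even `k` and `|k - p|/2 + 1` for odd `k`.
Walks of that length are explicit; conversely a walk from `a` to `b` writes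
`b - a = 2s + pt` with `|s| + |t|` at most its length, and no such representation with
`|b - a| < 2p` is shorter than the formula.

By this formula the two ends of an edge are equidistant from at most two vertices, so every
local resolving neighbourhood has at least `2p - 2` elements and the constant `1/(2p - 2)` is a
local resolving function. Conversely every vertex `w` is equidistant from the ends of some edge,
so any local resolving function `ζ` has `1 + ζ w ≤ ∑ ζ`; summing over `w` gives
`2p ≤ (2p - 1) ∑ ζ`.
-/

section LocalResolving

variable {V : Type*} [Fintype V] {G : SimpleGraph V} {ζ : V → ℝ}

theorem isLocalResolvingFunction_one (G : SimpleGraph V) : IsLocalResolvingFunction G 1 := by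
  refine ⟨fun _ => ⟨zero_le_one, le_rfl⟩, fun u v huv => ?_⟩
  have hu : u ∈ univ.filter fun w => G.dist w u ≠ G.dist w v := by
    simp [SimpleGraph.dist_eq_one_iff_adj.mpr huv]
  exact single_le_sum (f := (1 : V → ℝ)) (fun _ _ => zero_le_one) hu

theorem ldimf_le_sum (hζ : IsLocalResolvingFunction G ζ) : ldimf G ≤ ∑ v, ζ v :=
  csInf_le ⟨0, by rintro _ ⟨ξ, hξ, rfl⟩; exact sum_nonneg fun v _ => (hξ.1 v).1⟩ ⟨ζ, hζ, rfl⟩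

theorem le_ldimf {a : ℝ} (h : ∀ ζ, IsLocalResolvingFunction G ζ → a ≤ ∑ v, ζ v) :
    a ≤ ldimf G :=
  le_csInf ⟨_, 1, isLocalResolvingFunction_one G, rfl⟩ (by rintro _ ⟨ζ, hζ, rfl⟩; exact h ζ hζ)

theorem isLocalResolvingFunction_const_inv {m : ℕ} (hm : 0 < m)
    (h : ∀ u v, G.Adj u v → m ≤ #{w | G.dist w u ≠ G.dist w v}) :
    IsLocalResolvingFunction G fun _ => (m : ℝ)⁻¹ := by
  have hm' : (1 : ℝ) ≤ m := by exact_mod_cast hm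
  refine ⟨fun _ => ⟨by positivity, inv_le_one_of_one_le₀ hm'⟩, fun u v huv => ?_⟩
  rw [sum_const, nsmul_eq_mul, ← div_eq_mul_inv, one_le_div (by positivity)]
  exact_mod_cast h u v huv

theorem IsLocalResolvingFunction.one_add_le_sum (hζ : IsLocalResolvingFunction G ζ) {u v w : V}
    (huv : G.Adj u v) (hw : G.dist w u = G.dist w v) : 1 + ζ w ≤ ∑ x, ζ x := by
  rw [← sum_filter_add_sum_filter_not univ (fun x => G.dist x u ≠ G.dist x v)]
  refine add_le_add (hζ.2 u v huv) (single_le_sum (fun x _ => (hζ.1 x).1) ?_)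
  simpa using hw

theorem IsLocalResolvingFunction.card_le_card_sub_one_mul_sum
    (hζ : IsLocalResolvingFunction G ζ) (h : ∀ w, ∃ u v, G.Adj u v ∧ G.dist w u = G.dist w v) :
    (Fintype.card V : ℝ) ≤ (Fintype.card V - 1) * ∑ v, ζ v := by
  have hsum : ∑ w : V, (1 + ζ w) ≤ ∑ _w : V, ∑ v, ζ v := sum_le_sum fun w _ => by
    obtain ⟨u, v, huv, hw⟩ := h w
    exact hζ.one_add_le_sum huv hw
  simp only [sum_add_distrib, sum_const, card_univ, nsmul_eq_mul, mul_one] at hsum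
  linarith

end LocalResolving

section ToeplitzWalks

variable {n d : ℕ} {S : Set ℕ}

theorem toeplitzGraph_adj_of_val_eq_add {a b : Fin n} (hd : d ∈ S) (hd0 : 0 < d)
    (h : (b : ℕ) = a + d) : (toeplitzGraph n S).Adj a b :=
  ⟨fun hab => by subst hab; omega,
    by rwa [Nat.dist_eq_sub_of_le (by omega), h, Nat.add_sub_cancel_left]⟩

theorem toeplitzGraph_exists_walk_of_val_eq_add_mul (hd : d ∈ S) (hd0 : 0 < d) (m : ℕ) :
    ∀ {a b : Fin n}, (b : ℕ) = a + d * m →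
      ∃ w : (toeplitzGraph n S).Walk a b, w.length = m := by
  induction m with
  | zero =>
    intro a b h
    obtain rfl : a = b := Fin.ext (by simpa using h.symm)
    exact ⟨.nil, rfl⟩
  | succ m ih =>
    intro a b h
    obtain ⟨w, hw⟩ := ih (a := ⟨a + d, by rw [mul_add_one] at h; omega⟩) (b := b)
      (show (b : ℕ) = a + d + d * m by rw [h]; ring)
    exact ⟨.cons (toeplitzGraph_adj_of_val_eq_add hd hd0 rfl) w, by simp [hw]⟩

theorem toeplitzGraph_exists_walk_of_dist_eq_mul (hd : d ∈ S) (hd0 : 0 < d) {m : ℕ}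
    {a b : Fin n} (h : Nat.dist a b = d * m) :
    ∃ w : (toeplitzGraph n S).Walk a b, w.length = m := by
  rcases le_total (a : ℕ) b with hab | hba
  · exact toeplitzGraph_exists_walk_of_val_eq_add_mul hd hd0 m (by rw [← h, Nat.dist]; omega)
  · obtain ⟨w, hw⟩ := toeplitzGraph_exists_walk_of_val_eq_add_mul hd hd0 m (a := b) (b := a)
      (by rw [← h, Nat.dist]; omega)
    exact ⟨w.reverse, by simpa using hw⟩

theorem toeplitzGraph_two_p_exists_walk_of_dist_eq (p : ℕ) (hp : 0 < p) {a b : Fin n} (x y : Fin n)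
    {i j k : ℕ} (hax : Nat.dist a x = p * i) (hxy : Nat.dist x y = 2 * j)
    (hyb : Nat.dist y b = p * k) :
    ∃ w : (toeplitzGraph n {2, p}).Walk a b, w.length = i + j + k := by
  have h2 : 2 ∈ ({2, p} : Set ℕ) := Set.mem_insert _ _
  have hp' : p ∈ ({2, p} : Set ℕ) := Set.mem_insert_of_mem _ rfl
  obtain ⟨w₁, hw₁⟩ := toeplitzGraph_exists_walk_of_dist_eq_mul hp' hp hax
  obtain ⟨w₂, hw₂⟩ := toeplitzGraph_exists_walk_of_dist_eq_mul h2 two_pos hxy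
  obtain ⟨w₃, hw₃⟩ := toeplitzGraph_exists_walk_of_dist_eq_mul hp' hp hyb
  exact ⟨w₁.append (w₂.append w₃), by simp [hw₁, hw₂, hw₃, add_assoc]⟩

theorem toeplitzGraph_two_p_exists_sub_eq_of_walk (p : ℕ) {a b : Fin n}
    (w : (toeplitzGraph n {2, p}).Walk a b) :
    ∃ s t : ℤ, (b : ℤ) - a = 2 * s + p * t ∧ s.natAbs + t.natAbs ≤ w.length := by
  induction w with
  | nil => exact ⟨0, 0, by ring, by simp⟩
  | @cons a c b hac w ih =>
    obtain ⟨s, t, hst, hlen⟩ := ih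
    have hstep : (c : ℤ) - a = 2 ∨ (c : ℤ) - a = -2 ∨ (c : ℤ) - a = p ∨ (c : ℤ) - a = -p := by
      have := hac.2
      simp only [Set.mem_insert_iff, Set.mem_singleton_iff, Nat.dist] at this
      omega
    rw [SimpleGraph.Walk.length_cons]
    rcases hstep with h | h | h | h
    · exact ⟨s + 1, t, by linarith, by omega⟩
    · exact ⟨s - 1, t, by linarith, by omega⟩
    · exact ⟨s, t + 1, by linarith, by omega⟩
    · exact ⟨s, t - 1, by linarith, by omega⟩

end ToeplitzWalks

section ToeplitzTwoP

variable {p : ℕ}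

local notation "𝕋" p:max => toeplitzGraph (2 * p) {2, p}

-- Even offsets are covered by `2`-steps alone, or by two `p`-steps and `2`-steps back;
-- odd offsets take exactly one `p`-step.
def toeplitzDist (p k : ℕ) : ℕ :=
  if k % 2 = 0 then min (k / 2) (p + 2 - k / 2) else Nat.dist k p / 2 + 1

theorem toeplitzDist_le_natAbs_add_natAbs (hodd : Odd p) {s t : ℤ}
    (h : (2 * s + p * t).natAbs < 2 * p) :
    toeplitzDist p (2 * s + p * t).natAbs ≤ s.natAbs + t.natAbs := by
  have hpo := Nat.odd_iff.mp hodd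
  have hp : (0 : ℤ) ≤ p := by positivity
  have hbig : 3 ≤ t → 3 * (p : ℤ) ≤ p * t := fun ht => by nlinarith
  have hsmall : t ≤ -3 → p * t ≤ -3 * (p : ℤ) := fun ht => by nlinarith
  rcases (by omega : t ≤ -3 ∨ t = -2 ∨ t = -1 ∨ t = 0 ∨ t = 1 ∨ t = 2 ∨ 3 ≤ t) with
    ht | rfl | rfl | rfl | rfl | rfl | ht
  all_goals
    unfold toeplitzDist Nat.dist
    split_ifs <;> omega

theorem toeplitzGraph_two_p_exists_walk_length_le (hodd : Odd p) (a b : Fin (2 * p)) :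
    ∃ w : (𝕋 p).Walk a b, w.length ≤ toeplitzDist p (Nat.dist a b) := by
  wlog hab : (a : ℕ) ≤ b generalizing a b
  · obtain ⟨w, hw⟩ := this b a (by omega)
    exact ⟨w.reverse, by rwa [SimpleGraph.Walk.length_reverse, Nat.dist_comm]⟩
  have hp := hodd.pos
  have hpo := Nat.odd_iff.mp hodd
  have ha := a.isLt
  have hb := b.isLt
  have hdist : Nat.dist a b = b - a := by rw [Nat.dist]; omega
  rw [hdist]
  suffices ∃ x y i j k : ℕ, x < 2 * p ∧ y < 2 * p ∧ Nat.dist a x = p * i ∧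
      Nat.dist x y = 2 * j ∧ Nat.dist y b = p * k ∧ i + j + k ≤ toeplitzDist p (b - a) by
    obtain ⟨x, y, i, j, k, hx, hy, hax, hxy, hyb, hle⟩ := this
    obtain ⟨w, hw⟩ := toeplitzGraph_two_p_exists_walk_of_dist_eq p hp ⟨x, hx⟩ ⟨y, hy⟩ hax hxy hyb
    exact ⟨w, hw ▸ hle⟩
  unfold toeplitzDist Nat.dist
  split_ifs with heven
  · by_cases hshort : (b : ℕ) - a ≤ p + 2
    · exact ⟨a, b, 0, ((b : ℕ) - a) / 2, 0, by omega⟩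
    · exact ⟨a + p, b - p, 1, p - ((b : ℕ) - a) / 2, 1, by omega⟩
  · by_cases hup : (a : ℕ) + p < 2 * p
    · exact ⟨a + p, b, 1, Nat.dist (a + p) b / 2, 0, by unfold Nat.dist; omega⟩
    · exact ⟨a, b - p, 0, (p - ((b : ℕ) - a)) / 2, 1, by omega⟩

theorem toeplitzGraph_two_p_dist (hodd : Odd p) (a b : Fin (2 * p)) :
    (𝕋 p).dist a b = toeplitzDist p (Nat.dist a b) := by
  obtain ⟨w, hw⟩ := toeplitzGraph_two_p_exists_walk_length_le hodd a b
  refine le_antisymm ((SimpleGraph.dist_le w).trans hw) ?_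
  obtain ⟨w', hw'⟩ := w.reachable.exists_walk_length_eq_dist
  obtain ⟨s, t, hst, hlen⟩ := toeplitzGraph_two_p_exists_sub_eq_of_walk p w'
  have hab : Nat.dist a b = (2 * s + p * t).natAbs := by rw [← hst, Nat.dist]; omega
  rw [hab, ← hw']
  exact (toeplitzDist_le_natAbs_add_natAbs hodd (by omega)).trans hlen

theorem toeplitzDist_dist_eq_cases (hodd : Odd p) {u v w : ℕ} (hv : v < 2 * p) (hw : w < 2 * p)
    (huv : v = u + 2 ∨ v = u + p)
    (h : toeplitzDist p (Nat.dist w u) = toeplitzDist p (Nat.dist w v)) :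
    v = u + 2 ∧ (w = u + 1 ∨ w = u + p + 3 ∨ w + p + 1 = u) ∨
      v = u + p ∧ (w + 1 = u ∨ w = u + p + 1) := by
  have hpo := Nat.odd_iff.mp hodd
  unfold toeplitzDist Nat.dist at h
  rcases huv with rfl | rfl
  · refine .inl ⟨rfl, ?_⟩
    split_ifs at h <;> omega
  · refine .inr ⟨rfl, ?_⟩
    split_ifs at h <;> omega

theorem toeplitzGraph_two_p_card_filter_dist_eq_le_two (hodd : Odd p) {u v : Fin (2 * p)} (huv : (𝕋 p).Adj u v) :
    #{w | (𝕋 p).dist w u = (𝕋 p).dist w v} ≤ 2 := by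
  wlog hlt : (u : ℕ) < v generalizing u v
  · simpa only [eq_comm] using this huv.symm (by have := Fin.val_ne_of_ne huv.ne; omega)
  have hstep : (v : ℕ) = u + 2 ∨ (v : ℕ) = u + p := by
    have := huv.2
    simp only [Set.mem_insert_iff, Set.mem_singleton_iff, Nat.dist] at this
    omega
  by_contra! h
  obtain ⟨w₁, hw₁, w₂, hw₂, w₃, hw₃, h₁₂, h₁₃, h₂₃⟩ := two_lt_card.mp h
  simp only [mem_filter, mem_univ, true_and, toeplitzGraph_two_p_dist hodd] at hw₁ hw₂ hw₃
  have hc₁ := toeplitzDist_dist_eq_cases hodd v.isLt w₁.isLt hstep hw₁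
  have hc₂ := toeplitzDist_dist_eq_cases hodd v.isLt w₂.isLt hstep hw₂
  have hc₃ := toeplitzDist_dist_eq_cases hodd v.isLt w₃.isLt hstep hw₃
  have := Fin.val_ne_of_ne h₁₂
  have := Fin.val_ne_of_ne h₁₃
  have := Fin.val_ne_of_ne h₂₃
  omega

theorem toeplitzGraph_two_p_le_card_filter_dist_ne (hodd : Odd p) {u v : Fin (2 * p)} (huv : (𝕋 p).Adj u v) :
    2 * p - 2 ≤ #{w | (𝕋 p).dist w u ≠ (𝕋 p).dist w v} := by
  have hsplit := card_filter_add_card_filter_not (s := univ)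
    fun w => (𝕋 p).dist w u = (𝕋 p).dist w v
  rw [card_univ, Fintype.card_fin] at hsplit
  have := toeplitzGraph_two_p_card_filter_dist_eq_le_two hodd huv
  simp only [ne_eq]
  omega

theorem toeplitzGraph_two_p_exists_adj_dist_eq (hodd : Odd p) (hp3 : 3 ≤ p) (w : Fin (2 * p)) :
    ∃ u v, (𝕋 p).Adj u v ∧ (𝕋 p).dist w u = (𝕋 p).dist w v := by
  have hpo := Nat.odd_iff.mp hodd
  have hw := w.isLt
  suffices ∃ u v : ℕ, v < 2 * p ∧ (u + 2 = v ∨ u + p = v) ∧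
      toeplitzDist p (Nat.dist w u) = toeplitzDist p (Nat.dist w v) by
    obtain ⟨u, v, hv, huv, h⟩ := this
    refine ⟨⟨u, by omega⟩, ⟨v, hv⟩, ?_, by rwa [toeplitzGraph_two_p_dist hodd,
      toeplitzGraph_two_p_dist hodd]⟩
    rcases huv with huv | huv
    · exact toeplitzGraph_adj_of_val_eq_add (Set.mem_insert _ _) two_pos huv.symm
    · exact toeplitzGraph_adj_of_val_eq_add (Set.mem_insert_of_mem _ rfl) (by omega) huv.symm
  by_cases h0 : (w : ℕ) = 0
  · refine ⟨1, p + 1, by omega, by omega, ?_⟩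
    unfold toeplitzDist Nat.dist
    split_ifs <;> omega
  by_cases hlast : (w : ℕ) = 2 * p - 1
  · refine ⟨p - 2, 2 * p - 2, by omega, by omega, ?_⟩
    unfold toeplitzDist Nat.dist
    split_ifs <;> omega
  · refine ⟨w - 1, w + 1, by omega, by omega, ?_⟩
    unfold toeplitzDist Nat.dist
    split_ifs <;> omega

end ToeplitzTwoP

theorem ldimf_toeplitz_two_p_general (p : ℕ) (hodd : Odd p) (h5 : 5 ≤ p) :
    2 * (p : ℝ) / (2 * (p : ℝ) - 1) ≤ ldimf (toeplitzGraph (2 * p) {2, p}) ∧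
      ldimf (toeplitzGraph (2 * p) {2, p}) ≤ 2 * (p : ℝ) / (2 * (p : ℝ) - 2) ∧
      2 * (p : ℝ) / (2 * (p : ℝ) - 2) = (p : ℝ) / ((p : ℝ) - 1) := by
  have hp3 : 3 ≤ p := by omega
  have hp : (3 : ℝ) ≤ p := by exact_mod_cast hp3
  refine ⟨le_ldimf fun ζ hζ => ?_, ?_, by field_simp⟩
  · have h := hζ.card_le_card_sub_one_mul_sum (toeplitzGraph_two_p_exists_adj_dist_eq hodd hp3)
    rw [Fintype.card_fin, Nat.cast_mul, Nat.cast_two] at h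
    rw [div_le_iff₀ (by linarith)]
    linarith
  · calc ldimf (toeplitzGraph (2 * p) {2, p})
        ≤ ∑ _v : Fin (2 * p), ((2 * p - 2 : ℕ) : ℝ)⁻¹ :=
          ldimf_le_sum <| isLocalResolvingFunction_const_inv (by omega)
            fun _ _ => toeplitzGraph_two_p_le_card_filter_dist_ne hodd
      _ = 2 * (p : ℝ) / (2 * (p : ℝ) - 2) := by
        rw [sum_const, card_univ, Fintype.card_fin, nsmul_eq_mul, Nat.cast_sub (by omega)]
        push_cast
        ring

/-- For every odd prime `p` with `p ≥ 5`,
`2p/(2p-1) ≤ ldimf(T_{2p}⟨{2, p}⟩) ≤ 2p/(2p-2) = p/(p-1)`. -/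
theorem ldimf_toeplitz_two_p (p : ℕ) (hp : p.Prime) (hodd : Odd p) (h5 : 5 ≤ p) :
    2 * (p : ℝ) / (2 * (p : ℝ) - 1) ≤ ldimf (toeplitzGraph (2 * p) {2, p}) ∧
      ldimf (toeplitzGraph (2 * p) {2, p}) ≤ 2 * (p : ℝ) / (2 * (p : ℝ) - 2) ∧
      2 * (p : ℝ) / (2 * (p : ℝ) - 2) = (p : ℝ) / ((p : ℝ) - 1) :=
  ldimf_toeplitz_two_p_general p hodd h5
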